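/- arXiv:nlin/0302048 — 6 statements merged into one kernel-verified Lean document; each statement's English description precedes it below -/
import Mathlib

section
/- If F is a functional shift (a shift space over a finite set of functions on a finite alphabet A), then the generated shift X_F = {x ∈ A^ℤ : there exists (f_i) ∈ F with x_{i+1} = f_i(x_i) for all i ∈ ℤ} is itself a shift space, i.e., X_F equals the set of bi-infinite sequences avoiding some collection of forbidden blocks. -/
namespace FS

/-- The block `w` occurs (as a consecutive subword) in the bi-infinite sequence `x`. -/
def occursIn {A : Type} (w : List A) (x : ℤ → A) : Prop :=
  ∃ k : ℤ, ∀ i : Fin w.length, x (k + (i : ℕ)) = w.get i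

/-- The set of bi-infinite sequences avoiding every block of `Fb`. -/
def shiftOf {A : Type} (Fb : Set (List A)) : Set (ℤ → A) :=
  {x | ∀ w ∈ Fb, ¬ occursIn w x}

/-- A shift space: a set of bi-infinite sequences described by forbidden blocks. -/
def IsShiftSpace {A : Type} (X : Set (ℤ → A)) : Prop :=
  ∃ Fb : Set (List A), X = shiftOf Fb

/-- The generated shift of a functional shift `ℱ`. -/
def generated {A : Type} (ℱ : Set (ℤ → (A → A))) : Set (ℤ → A) :=
  {x | ∃ f ∈ ℱ, ∀ i : ℤ, x (i + 1) = f i (x i)}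

/-- The language of a set of bi-infinite sequences: all blocks occurring in its points. -/
def lang {A : Type} (X : Set (ℤ → A)) : Set (List A) :=
  {w | ∃ x ∈ X, occursIn w x}

/-- The `n`-blocks occurring in points of `X`. -/
def blocksN {A : Type} (X : Set (ℤ → A)) (n : ℕ) : Set (List A) :=
  {w | w ∈ lang X ∧ w.length = n}

/-- Shift spaces defined by forbidden blocks are invariant under translation. -/
lemma shiftOf_translate {A : Type} (Fb : Set (List A)) (y : ℤ → A) (c : ℤ)
    (hy : y ∈ shiftOf Fb) : (fun i => y (i + c)) ∈ shiftOf Fb := by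
  rintro w hw ⟨k, hk⟩
  refine hy w hw ⟨k + c, fun i => ?_⟩
  have := hk i
  simpa [add_right_comm] using this

/-- An ultrafilter on a sequence with values in a finite type is eventually constant. -/
lemma exists_ultra_const {β : Type} [Finite β] (U : Ultrafilter ℕ) (h : ℕ → β) :
    ∃ b : β, {n | h n = b} ∈ U := by
  classical
  have : (⋃ b ∈ (Set.univ : Set β), {n | h n = b}) ∈ U := by
    have : (⋃ b ∈ (Set.univ : Set β), {n | h n = b}) = Set.univ := by
      ext n; simp
    rw [this]; exact Filter.univ_mem
  rcases (Ultrafilter.finite_biUnion_mem_iff Set.finite_univ).mp this with ⟨b, _, hb⟩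
  exact ⟨b, hb⟩

/-- the generated shift of a functional shift is a shift space. -/
theorem generated_isShiftSpace {A : Type} [Fintype A] [Nonempty A]
    (F : Set (A → A)) (hF : F.Finite) (ℱ : Set (ℤ → (A → A)))
    (hsub : ∀ g ∈ ℱ, ∀ i : ℤ, g i ∈ F) (hshift : IsShiftSpace ℱ) :
    IsShiftSpace (generated ℱ) := by
  classical
  obtain ⟨Fb0, hFb0⟩ := hshift
  refine ⟨(lang (generated ℱ))ᶜ, ?_⟩
  ext x
  constructor
  · -- easy direction
    intro hx w hw hocc
    exact hw ⟨x, hx, hocc⟩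
  · intro hx
    -- Step 1: for each n, find fn ∈ ℱ matching x on the window [-n, n-1].
    have key : ∀ n : ℕ, ∃ fn ∈ ℱ, ∀ i : ℤ, -(n : ℤ) ≤ i → i + 1 ≤ (n : ℤ) →
        x (i + 1) = fn i (x i) := by
      intro n
      set w : List A := (List.range (2 * n + 1)).map (fun j : ℕ => x (-(n : ℤ) + (j : ℤ))) with hw
      have hlen : w.length = 2 * n + 1 := by simp [hw]
      have hwget : ∀ (j : ℕ) (hj : j < w.length), w.get ⟨j, hj⟩ = x (-(n : ℤ) + j) := by
        intro j hj
        simp [hw]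
      have hoccx : occursIn w x := by
        refine ⟨-(n : ℤ), fun i => ?_⟩
        rw [hwget i i.2]
      have hwl : w ∈ lang (generated ℱ) := by
        by_contra hcon
        exact hx w hcon hoccx
      obtain ⟨y, hy, k, hk⟩ := hwl
      obtain ⟨f, hf, hfy⟩ := hy
      -- y (k + j) = x (-n + j) for j < 2n+1
      have hyx : ∀ (j : ℕ), j < 2 * n + 1 → y (k + j) = x (-(n : ℤ) + j) := by
        intro j hj
        have hj' : j < w.length := by omega
        have := hk ⟨j, hj'⟩
        rw [hwget j hj'] at this
        exact this
      refine ⟨fun i => f (i + (k + n)), ?_, ?_⟩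
      · rw [hFb0] at hf ⊢
        exact shiftOf_translate Fb0 f (k + n) hf
      · intro i hi1 hi2
        set j : ℕ := (i + n).toNat with hj
        have hjz : (j : ℤ) = i + n := Int.toNat_of_nonneg (by omega)
        have hjlt : j < 2 * n + 1 := by omega
        have hj1lt : j + 1 < 2 * n + 1 := by omega
        have e1 : y (k + j) = x i := by
          rw [hyx j hjlt]; congr 1; omega
        have e2 : y (k + (j + 1 : ℕ)) = x (i + 1) := by
          rw [hyx (j + 1) hj1lt]; congr 1; push_cast; omega
        have := hfy (k + j)
        rw [e1] at this
        have e3 : k + (j : ℤ) + 1 = k + ((j + 1 : ℕ) : ℤ) := by push_cast; ring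
        rw [e3, e2] at this
        have e4 : i + (k + (n : ℤ)) = k + j := by omega
        show x (i + 1) = f (i + (k + (n : ℤ))) (x i)
        rw [e4]
        exact this
    choose fn hfn hfnx using key
    -- Step 2: take an ultrafilter limit of the fn.
    have : Finite (A → A) := inferInstance
    let U : Ultrafilter ℕ := Ultrafilter.of Filter.atTop
    have hUle : (U : Filter ℕ) ≤ Filter.atTop := Ultrafilter.of_le _
    have hconst : ∀ i : ℤ, ∃ b : A → A, {n | fn n i = b} ∈ U := fun i =>
      exists_ultra_const U (fun n => fn n i)
    choose g hg using hconst
    -- agreement on finite sets, beyond any threshold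
    have agree : ∀ (S : Finset ℤ) (N : ℕ), ∃ n, N ≤ n ∧ ∀ i ∈ S, fn n i = g i := by
      intro S N
      have h1 : {n | ∀ i ∈ S, fn n i = g i} ∈ U := by
        have := (Filter.eventually_all_finset S (l := (U : Filter ℕ))
          (p := fun i n => fn n i = g i)).2 (fun i _ => hg i)
        exact this
      have h2 : {n | N ≤ n} ∈ U := hUle (Filter.eventually_ge_atTop N)
      have h3 := Filter.inter_mem h1 h2
      obtain ⟨n, hn1, hn2⟩ := Ultrafilter.nonempty_of_mem h3
      exact ⟨n, hn2, hn1⟩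
    refine ⟨g, ?_, ?_⟩
    · -- g ∈ ℱ
      rw [hFb0]
      rintro w hw ⟨k, hk⟩
      set S : Finset ℤ := (Finset.range w.length).image (fun j : ℕ => k + (j : ℤ)) with hS
      obtain ⟨n, -, hagree⟩ := agree S 0
      rw [hFb0] at hfn
      refine hfn n w hw ⟨k, fun i => ?_⟩
      have hmem : k + ((i : ℕ) : ℤ) ∈ S := by
        simp only [hS, Finset.mem_image, Finset.mem_range]
        exact ⟨i, i.2, rfl⟩
      rw [hagree _ hmem]
      exact hk i
    · -- x (i+1) = g i (x i)
      intro i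
      obtain ⟨n, hn, hagree⟩ := agree {i} (i.natAbs + 1)
      have h1 : -(n : ℤ) ≤ i := by omega
      have h2 : i + 1 ≤ (n : ℤ) := by omega
      have := hfnx n i h1 h2
      rw [hagree i (Finset.mem_singleton_self i)] at this
      exact this

end FS
end

section
/- If ℱ is a functional shift, then the topological entropy of the generated shift is at most that of the functional shift: h(X_ℱ) ≤ h(ℱ), where h(X) = lim_{n→∞} (1/n) log₂ |B_n(X)|. -/
namespace FS

/-- Topological entropy of a shift space: `lim (1/n) log₂ |B_n(X)|`
(formalized via `limsup`, which agrees with the limit whenever it exists). -/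
noncomputable def entropy {A : Type} (X : Set (ℤ → A)) : ℝ :=
  Filter.atTop.limsup fun n : ℕ => Real.logb 2 (Nat.card (blocksN X n)) / n

/-! ### Auxiliary material -/

/-- The segment `x k, x (k+1), ..., x (k+n-1)` as a list. -/
def seg {α : Type} (x : ℤ → α) (k : ℤ) (n : ℕ) : List α :=
  List.ofFn fun i : Fin n => x (k + i)

lemma seg_length {α : Type} (x : ℤ → α) (k : ℤ) (n : ℕ) : (seg x k n).length = n := by
  simp [seg]

lemma seg_zero {α : Type} (x : ℤ → α) (k : ℤ) : seg x k 0 = [] := by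
  simp [seg]

lemma seg_succ {α : Type} (x : ℤ → α) (k : ℤ) (m : ℕ) :
    seg x k (m + 1) = x k :: seg x (k + 1) m := by
  simp only [seg, List.ofFn_succ]
  congr 1
  · simp
  · refine congrArg List.ofFn (funext fun i => ?_)
    congr 1
    simp only [Fin.val_succ]
    push_cast
    ring

lemma seg_mem_blocksN {α : Type} {X : Set (ℤ → α)} {x : ℤ → α} (hx : x ∈ X) (k : ℤ) (n : ℕ) :
    seg x k n ∈ blocksN X n := by
  refine ⟨⟨x, hx, k, ?_⟩, seg_length x k n⟩
  intro i
  simp [seg]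
  exact (List.get_ofFn (fun j : Fin n => x (k + j)) i).symm

lemma mem_blocksN_elim {α : Type} {X : Set (ℤ → α)} {w : List α} {n : ℕ}
    (hw : w ∈ blocksN X n) : ∃ x ∈ X, ∃ k : ℤ, w = seg x k n := by
  obtain ⟨⟨x, hxX, k, hk⟩, hlen⟩ := hw
  refine ⟨x, hxX, k, ?_⟩
  subst hlen
  conv_lhs => rw [← List.ofFn_get w]
  unfold seg
  congr 1
  funext i
  exact (hk i).symm

lemma blocksN_subset_range {α : Type} (X : Set (ℤ → α)) (n : ℕ) :
    blocksN X n ⊆ Set.range (List.ofFn : (Fin n → α) → List α) := by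
  intro w hw
  have h : w.length = n := hw.2
  subst h
  exact ⟨w.get, List.ofFn_get w⟩

lemma finite_blocksN {α : Type} [Finite α] (X : Set (ℤ → α)) (n : ℕ) :
    (blocksN X n).Finite :=
  (Set.finite_range _).subset (blocksN_subset_range X n)

lemma card_blocksN_le {α : Type} [Finite α] (X : Set (ℤ → α)) (n : ℕ) :
    Nat.card (blocksN X n) ≤ Nat.card α ^ n := by
  calc Nat.card (blocksN X n)
      ≤ Nat.card (Set.range (List.ofFn : (Fin n → α) → List α)) :=
        Nat.card_mono (Set.finite_range _) (blocksN_subset_range X n)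
    _ ≤ Nat.card (Fin n → α) :=
        Nat.card_le_card_of_surjective _ Set.rangeFactorization_surjective
    _ = Nat.card α ^ n := by
        simp [Nat.card_fun]

lemma logb_nat_nonneg (k : ℕ) : 0 ≤ Real.logb 2 k := by
  cases k with
  | zero => simp
  | succ m =>
      apply Real.logb_nonneg one_lt_two
      exact_mod_cast Nat.succ_le_succ (Nat.zero_le m)

lemma logb_nat_le {j k : ℕ} (h : j ≤ k) : Real.logb 2 j ≤ Real.logb 2 k := by
  rcases Nat.eq_zero_or_pos j with hj | hj
  · subst hj; simpa using logb_nat_nonneg k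
  · have hk : 0 < k := lt_of_lt_of_le hj h
    exact (Real.logb_le_logb one_lt_two (by exact_mod_cast hj) (by exact_mod_cast hk)).mpr
      (by exact_mod_cast h)

/-- Reconstruct a word from its first letter and the list of transition maps. -/
def reconstruct {α : Type} (a : α) : List (α → α) → List α
  | [] => [a]
  | g :: gs => a :: reconstruct (g a) gs

lemma reconstruct_cons {α : Type} (a : α) (g : α → α) (gs : List (α → α)) :
    reconstruct a (g :: gs) = a :: reconstruct (g a) gs := rfl

lemma reconstruct_seg {α : Type} (f : ℤ → α → α) (x : ℤ → α)
    (hx : ∀ i : ℤ, x (i + 1) = f i (x i)) :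
    ∀ (m : ℕ) (k : ℤ), seg x k (m + 1) = reconstruct (x k) (seg f k m) := by
  intro m
  induction m with
  | zero =>
      intro k
      rw [seg_succ, seg_zero, seg_zero]
      rfl
  | succ m ih =>
      intro k
      rw [seg_succ, seg_succ f, ih (k + 1), reconstruct_cons, ← hx k]

/-- Key counting estimate: `|B_{m+1}(X_ℱ)| ≤ |A| · |B_m(ℱ)|`. -/
lemma card_blocks_generated_le {A : Type} [Fintype A] (ℱ : Set (ℤ → (A → A))) (m : ℕ) :
    Nat.card (blocksN (generated ℱ) (m + 1)) ≤ Nat.card A * Nat.card (blocksN ℱ m) := by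
  classical
  haveI : Finite (blocksN ℱ m) := finite_blocksN ℱ m
  set φ : A × blocksN ℱ m → List A := fun p => reconstruct p.1 (p.2 : List (A → A)) with hφ
  have hsub : blocksN (generated ℱ) (m + 1) ⊆ Set.range φ := by
    intro w hw
    obtain ⟨x, hxX, k, hwx⟩ := mem_blocksN_elim hw
    obtain ⟨f, hfF, hfx⟩ := hxX
    refine ⟨(x k, ⟨seg f k m, seg_mem_blocksN hfF k m⟩), ?_⟩
    show reconstruct (x k) (seg f k m) = w
    rw [← reconstruct_seg f x hfx m k, hwx]
  calc Nat.card (blocksN (generated ℱ) (m + 1))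
      ≤ Nat.card (Set.range φ) := Nat.card_mono (Set.finite_range φ) hsub
    _ ≤ Nat.card (A × blocksN ℱ m) :=
        Nat.card_le_card_of_surjective _ Set.rangeFactorization_surjective
    _ = Nat.card A * Nat.card (blocksN ℱ m) := Nat.card_prod _ _

lemma entropy_empty {α : Type} : entropy (∅ : Set (ℤ → α)) = 0 := by
  have hb : ∀ n : ℕ, blocksN (∅ : Set (ℤ → α)) n = ∅ := by
    intro n
    ext w
    simp [blocksN, lang]
  have : (fun n : ℕ => Real.logb 2 (Nat.card (blocksN (∅ : Set (ℤ → α)) n)) / n)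
      = fun _ : ℕ => (0 : ℝ) := by
    funext n
    rw [hb n]
    simp
  rw [entropy, this, Filter.limsup_const]

/-- `h(X_ℱ) ≤ h(ℱ)`. -/
theorem entropy_generated_le {A : Type} [Fintype A] [Nonempty A]
    (F : Set (A → A)) (hF : F.Finite) (ℱ : Set (ℤ → (A → A)))
    (hsub : ∀ g ∈ ℱ, ∀ i : ℤ, g i ∈ F) (hshift : IsShiftSpace ℱ) :
    entropy (generated ℱ) ≤ entropy ℱ := by
  classical
  rcases Set.eq_empty_or_nonempty ℱ with hℱ | ⟨g, hg⟩
  · subst hℱ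
    have hgen : generated (∅ : Set (ℤ → (A → A))) = ∅ := by
      ext x; simp [generated]
    rw [hgen, entropy_empty, entropy_empty]
  -- notation
  set a : ℕ → ℝ := fun n => Real.logb 2 (Nat.card (blocksN (generated ℱ) n)) / n with ha
  set b : ℕ → ℝ := fun n => Real.logb 2 (Nat.card (blocksN ℱ n)) / n with hb
  have ha0 : ∀ n, 0 ≤ a n := fun n =>
    div_nonneg (logb_nat_nonneg _) (Nat.cast_nonneg n)
  -- b is bounded above
  set C : ℝ := Real.logb 2 (Nat.card (A → A)) with hC
  have hbC : ∀ n, b n ≤ C := by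
    intro n
    rcases Nat.eq_zero_or_pos n with hn | hn
    · subst hn
      simp only [hb, Nat.cast_zero, div_zero]
      exact logb_nat_nonneg _
    · have h1 : Real.logb 2 (Nat.card (blocksN ℱ n))
          ≤ Real.logb 2 (((Nat.card (A → A)) ^ n : ℕ)) :=
        logb_nat_le (card_blocksN_le ℱ n)
      have h2 : Real.logb 2 (((Nat.card (A → A)) ^ n : ℕ)) = n * C := by
        rw [hC]
        push_cast
        rw [Real.logb_pow]
      have hn' : (0 : ℝ) < n := by exact_mod_cast hn
      calc b n ≤ (n * C) / n := by
            rw [← h2]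
            exact div_le_div_of_nonneg_right h1 hn'.le
        _ = C := by field_simp
  have hbBdd : Filter.IsBoundedUnder (· ≤ ·) Filter.atTop b :=
    Filter.isBoundedUnder_of ⟨C, hbC⟩
  -- nonemptiness of blocks of ℱ
  have hBne : ∀ m : ℕ, 1 ≤ Nat.card (blocksN ℱ m) := by
    intro m
    haveI : Finite (blocksN ℱ m) := finite_blocksN ℱ m
    haveI : Nonempty (blocksN ℱ m) := ⟨⟨seg g 0 m, seg_mem_blocksN hg 0 m⟩⟩
    exact Nat.card_pos
  have hA1 : 1 ≤ Nat.card A := Nat.card_pos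
  -- main limsup estimate
  have key : entropy (generated ℱ) ≤ entropy ℱ := by
    rw [entropy, entropy, ← ha, ← hb]
    apply le_of_forall_pos_le_add
    intro ε hε
    have hcob : Filter.IsCoboundedUnder (· ≤ ·) Filter.atTop a :=
      Filter.IsBoundedUnder.isCoboundedUnder_le (Filter.isBoundedUnder_of ⟨0, ha0⟩)
    apply Filter.limsup_le_of_le hcob
    -- eventual bounds
    have hLlt : Filter.limsup b Filter.atTop < Filter.limsup b Filter.atTop + ε / 2 := by
      linarith
    obtain ⟨N1, hN1⟩ := Filter.eventually_atTop.mp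
      (Filter.eventually_lt_of_limsup_lt hLlt hbBdd)
    obtain ⟨N2, hN2⟩ := Filter.eventually_atTop.mp
      ((tendsto_const_div_atTop_nhds_zero_nat (Real.logb 2 (Nat.card A))).eventually_lt_const
        (by linarith : (0 : ℝ) < ε / 2))
    refine Filter.eventually_atTop.mpr ⟨max (N1 + 2) (max N2 2), fun n hn => ?_⟩
    have hn1 : N1 + 2 ≤ n := le_trans (le_max_left _ _) hn
    have hn2 : N2 ≤ n := le_trans (le_trans (le_max_left _ _) (le_max_right _ _)) hn
    have hn3 : 2 ≤ n := le_trans (le_trans (le_max_right _ _) (le_max_right _ _)) hn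
    obtain ⟨m, rfl⟩ : ∃ m, n = m + 1 := ⟨n - 1, by omega⟩
    have hm1 : 1 ≤ m := by omega
    have hmN1 : N1 ≤ m := by omega
    have hm' : (0 : ℝ) < m := by exact_mod_cast hm1
    have hmn : (m : ℝ) ≤ (m + 1 : ℕ) := by exact_mod_cast Nat.le_succ m
    have hn' : (0 : ℝ) < ((m + 1 : ℕ) : ℝ) := by positivity
    -- the counting step
    have hcard := card_blocks_generated_le ℱ m
    have hlog1 : Real.logb 2 (Nat.card (blocksN (generated ℱ) (m + 1)))
        ≤ Real.logb 2 ((Nat.card A * Nat.card (blocksN ℱ m) : ℕ)) := logb_nat_le hcard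
    have hlog2 : Real.logb 2 ((Nat.card A * Nat.card (blocksN ℱ m) : ℕ))
        = Real.logb 2 (Nat.card A) + Real.logb 2 (Nat.card (blocksN ℱ m)) := by
      push_cast
      apply Real.logb_mul
      · have := hA1; positivity
      · have := hBne m; positivity
    have step1 : a (m + 1)
        ≤ Real.logb 2 (Nat.card A) / (m + 1 : ℕ)
          + Real.logb 2 (Nat.card (blocksN ℱ m)) / (m + 1 : ℕ) := by
      rw [ha]
      simp only []
      rw [← add_div]
      exact div_le_div_of_nonneg_right (le_of_le_of_eq hlog1 hlog2) hn'.le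
    have step2 : Real.logb 2 (Nat.card (blocksN ℱ m)) / ((m + 1 : ℕ) : ℝ)
        ≤ Real.logb 2 (Nat.card (blocksN ℱ m)) / (m : ℝ) :=
      div_le_div_of_nonneg_left (logb_nat_nonneg _) hm' hmn
    have step3 : Real.logb 2 (Nat.card A) / ((m + 1 : ℕ) : ℝ) < ε / 2 := hN2 (m + 1) hn2
    have step4 : b m < Filter.limsup b Filter.atTop + ε / 2 := hN1 m hmN1
    have : a (m + 1) < ε / 2 + (Filter.limsup b Filter.atTop + ε / 2) := by
      have := step1.trans (add_le_add le_rfl step2)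
      calc a (m + 1) ≤ Real.logb 2 (Nat.card A) / ((m + 1 : ℕ) : ℝ)
            + Real.logb 2 (Nat.card (blocksN ℱ m)) / (m : ℝ) := this
        _ < ε / 2 + (Filter.limsup b Filter.atTop + ε / 2) := by
            have hbm : Real.logb 2 (Nat.card (blocksN ℱ m)) / (m : ℝ) = b m := rfl
            rw [hbm]
            exact add_lt_add step3 step4
    linarith
  exact key

end FS
end

section
/- Define D_ℱ(n, x) = {y = a x : a ∈ A^n, ∃ f ∈ B_{|y|-1}(ℱ), ∀ i, y_{i+1} = f_i(y_i)} for a block x over A. Then a block x belongs to B(X_ℱ) (the language of the generated shift) if and only if D_ℱ(n, x) ≠ ∅ for all n ∈ ℕ. -/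
namespace FS

/-- The block of functions `f` (of length `|y| - 1`) chains the block `y` together:
`y (i+1) = f i (y i)` for all applicable `i`. -/
def chains {A : Type} (f : List (A → A)) (y : List A) : Prop :=
  f.length = y.length - 1 ∧ ∀ i : ℕ, y[i + 1]? = (f[i]?).bind fun g => (y[i]?).map g

/-- `D_ℱ(n, x)`: the set of blocks `y = a ++ x` with `|a| = n` that are chained together by
some block of `ℱ` of length `|y| - 1`. -/
def Dset {A : Type} (ℱ : Set (ℤ → (A → A))) (n : ℕ) (x : List A) : Set (List A) :=
  {y | ∃ a : List A, a.length = n ∧ y = a ++ x ∧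
    ∃ f ∈ blocksN ℱ (y.length - 1), chains f y}

/-- shiftOf is shift-invariant. -/
lemma shift_mem_shiftOf {B : Type} (Fb : Set (List B)) (g : ℤ → B) (m : ℤ)
    (hg : g ∈ shiftOf Fb) : (fun i => g (i + m)) ∈ shiftOf Fb := by
  rintro w hw ⟨k, hk⟩
  exact hg w hw ⟨k + m, fun i => by
    have := hk i
    simpa [add_right_comm] using this⟩

/-- key step for the backward direction -/
lemma key_step {A : Type} [Nonempty A] (ℱ : Set (ℤ → (A → A))) (hshift : IsShiftSpace ℱ)
    (x : List A) (n : ℕ) (hD : (Dset ℱ n x).Nonempty) :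
    ∃ h ∈ ℱ, ∃ z : ℤ → A,
      (∀ i : ℤ, -(n : ℤ) ≤ i → z (i + 1) = h i (z i)) ∧
      (∀ j : Fin x.length, z ((j : ℕ) : ℤ) = x.get j) := by
  obtain ⟨y, a, hal, hyx, f, ⟨⟨g0, hg0, k, hk⟩, hfl⟩, -, hchain⟩ := hD
  have hL : y.length = n + x.length := by simp [hyx, hal]
  have d : A := Classical.arbitrary A
  refine ⟨fun i => g0 (i + (k + n)), ?_, ?_⟩
  · obtain ⟨Fb, rfl⟩ := hshift
    exact shift_mem_shiftOf Fb g0 (k + n) hg0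
  -- the recursively defined forward orbit
  set w : ℕ → A := fun j => Nat.rec (y.getD 0 d) (fun j wj => g0 (k + j) wj) j with hw
  have hwsucc : ∀ j : ℕ, w (j + 1) = g0 (k + j) (w j) := fun j => rfl
  have hyw : ∀ j : ℕ, j < y.length → y[j]? = some (w j) := by
    intro j
    induction j with
    | zero =>
      intro hj
      have h0 : w 0 = y.getD 0 d := rfl
      rw [h0, List.getD_eq_getElem?_getD, List.getElem?_eq_getElem hj]
      rfl
    | succ j ih =>
      intro hj
      have hj' : j < f.length := by omega
      have hfj : f[j]? = some (g0 (k + j)) := by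
        rw [List.getElem?_eq_getElem hj']
        have := hk ⟨j, hj'⟩
        simp only [List.get_eq_getElem] at this ⊢
        rw [← this]
      rw [hchain j, hfj, ih (by omega)]
      simp [hwsucc]
  refine ⟨fun i => w (i + n).toNat, ?_, ?_⟩
  · intro i hi
    show w (i + 1 + n).toNat = g0 (i + (k + n)) (w (i + n).toNat)
    have h1 : (i + 1 + n).toNat = (i + n).toNat + 1 := by omega
    have h2 : (k : ℤ) + ((i + n).toNat : ℤ) = i + (k + n) := by omega
    rw [h1, hwsucc, h2]
  · intro j
    show w (((j : ℕ) : ℤ) + n).toNat = x.get j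
    have hj : n + (j : ℕ) < y.length := by
      have := j.isLt; omega
    have h1 : (((j : ℕ) : ℤ) + n).toNat = n + (j : ℕ) := by omega
    have h2 : y[n + (j : ℕ)]? = x[(j : ℕ)]? := by
      rw [hyx, List.getElem?_append_right (by omega)]
      congr 1
      omega
    have h3 : x[(j : ℕ)]? = some (x.get j) := by
      simp [List.getElem?_eq_getElem j.isLt]
    have h4 := (hyw _ hj).symm.trans (h2.trans h3)
    rw [h1]
    exact Option.some.inj h4

/-- `x ∈ B(X_ℱ)` iff `D_ℱ(n, x) ≠ ∅` for every `n`. -/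
theorem mem_lang_generated_iff_Dset {A : Type} [Fintype A] [Nonempty A]
    (F : Set (A → A)) (hF : F.Finite) (ℱ : Set (ℤ → (A → A)))
    (hsub : ∀ g ∈ ℱ, ∀ i : ℤ, g i ∈ F) (hshift : IsShiftSpace ℱ) (x : List A) :
    x ∈ lang (generated ℱ) ↔ ∀ n : ℕ, (Dset ℱ n x).Nonempty := by
  constructor
  · rintro ⟨z, ⟨g, hgℱ, hgz⟩, k, hk⟩ n
    set a : List A := List.ofFn (fun j : Fin n => z (k - n + j)) with hadef
    have haL : a.length = n := by simp [hadef]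
    set y : List A := a ++ x with hydef
    have hyL : y.length = n + x.length := by simp [hydef, haL]
    have hyv : ∀ i : ℕ, i < n + x.length → y[i]? = some (z (k - n + i)) := by
      intro i hi
      by_cases hin : i < n
      · rw [hydef, List.getElem?_append_left (by omega)]
        rw [hadef, List.getElem?_ofFn]
        simp [List.ofFnNthVal, hin]
      · rw [hydef, List.getElem?_append_right (by omega), haL]
        have hix : i - n < x.length := by omega
        rw [List.getElem?_eq_getElem hix]
        have h5 := hk ⟨i - n, hix⟩
        simp only [List.get_eq_getElem] at h5
        have h6 : (k : ℤ) + ((i - n : ℕ) : ℤ) = k - n + i := by omega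
        rw [h6] at h5
        rw [← h5]
    set f : List (A → A) := List.ofFn (fun j : Fin (n + x.length - 1) => g (k - n + j)) with hfdef
    have hfL : f.length = n + x.length - 1 := by simp [hfdef]
    refine ⟨y, a, haL, rfl, f, ⟨⟨g, hgℱ, k - n, ?_⟩, by rw [hfL, hyL]⟩, by rw [hfL, hyL], ?_⟩
    · intro i
      simp only [List.get_eq_getElem, hfdef, List.getElem_ofFn]
    · intro i
      by_cases h1 : i + 1 < n + x.length
      · have h2 : i < n + x.length - 1 := by omega
        rw [hyv (i + 1) h1, hyv i (by omega)]
        have hfi : f[i]? = some (g (k - n + i)) := by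
          rw [hfdef, List.getElem?_ofFn]
          simp [List.ofFnNthVal, h2]
        rw [hfi]
        simp only [Option.bind_some, Option.map_some]
        congr 1
        have harith : (k - n + ((i : ℕ) + 1 : ℕ) : ℤ) = (k - n + i) + 1 := by push_cast; ring
        rw [harith, hgz]
      · rw [List.getElem?_eq_none (by omega), List.getElem?_eq_none (l := f) (by omega)]
        rfl
  · intro hD
    have key := fun n => key_step ℱ hshift x n (hD n)
    choose h hhℱ z hrel hxz using key
    set U := Filter.hyperfilter ℕ with hUdef
    have hU : ∀ m : ℕ, {n : ℕ | m ≤ n} ∈ U := by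
      intro m
      apply Filter.mem_hyperfilter_of_finite_compl
      have : {n : ℕ | m ≤ n}ᶜ = {n | n < m} := by ext n; simp
      rw [this]
      exact Set.finite_lt_nat m
    have limgen : ∀ {B : Type} (s : Set B), s.Finite → ∀ v : ℕ → B, (∀ n, v n ∈ s) →
        ∃ c ∈ s, {n : ℕ | v n = c} ∈ U := by
      intro B s hs v hv
      obtain ⟨c, hcs, hc⟩ := Ultrafilter.eq_pure_of_finite_mem (f := U.map v) (s := s)
        hs (Ultrafilter.mem_map.2 (Filter.univ_mem' hv))
      refine ⟨c, hcs, ?_⟩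
      have hc2 : {c} ∈ U.map v := by rw [hc]; exact Ultrafilter.mem_pure.2 rfl
      have := Ultrafilter.mem_map.1 hc2
      simpa [Set.preimage] using this
    have limA : ∀ i : ℤ, ∃ c : A, {n : ℕ | z n i = c} ∈ U := by
      intro i
      obtain ⟨c, -, hc⟩ := limgen (Set.univ : Set A) Set.finite_univ (fun n => z n i)
        (fun n => Set.mem_univ _)
      exact ⟨c, hc⟩
    choose zl hzl using limA
    have limF : ∀ i : ℤ, ∃ c ∈ F, {n : ℕ | h n i = c} ∈ U :=
      fun i => limgen F hF (fun n => h n i) (fun n => hsub _ (hhℱ n) i)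
    choose hl _ hhl using limF
    refine ⟨zl, ⟨hl, ?_, ?_⟩, 0, ?_⟩
    · -- hl ∈ ℱ
      obtain ⟨Fb, hFb⟩ := hshift
      rw [hFb]
      rintro w hw ⟨p, hp⟩
      have hmem : (⋂ i : Fin w.length, {n : ℕ | h n (p + (i : ℕ)) = hl (p + (i : ℕ))}) ∈ U :=
        Filter.iInter_mem.2 fun i => hhl _
      obtain ⟨m, hm⟩ := (Filter.nonempty_of_mem hmem)
      have : h m ∈ shiftOf Fb := hFb ▸ hhℱ m
      refine this w hw ⟨p, fun i => ?_⟩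
      have h1 : h m (p + (i : ℕ)) = hl (p + (i : ℕ)) := Set.mem_iInter.1 hm i
      rw [h1]
      exact hp i
    · -- orbit relation
      intro i
      have hmem : ({n : ℕ | z n (i + 1) = zl (i + 1)} ∩ {n | h n i = hl i} ∩
          {n | z n i = zl i} ∩ {n | (-i).toNat ≤ n}) ∈ U :=
        Filter.inter_mem (Filter.inter_mem (Filter.inter_mem (hzl _) (hhl _)) (hzl _)) (hU _)
      obtain ⟨m, ⟨⟨⟨e1, e2⟩, e3⟩, e4⟩⟩ := Filter.nonempty_of_mem hmem
      have hge : -(m : ℤ) ≤ i := by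
        simp only [Set.mem_setOf_eq] at e4; omega
      rw [← e1, ← e2, ← e3]
      exact hrel m i hge
    · -- x occurs at 0
      intro i
      obtain ⟨m, hm⟩ := Filter.nonempty_of_mem (hzl ((i : ℕ) : ℤ))
      have : zl ((i : ℕ) : ℤ) = x.get i := by
        rw [← hm]; exact hxz m i
      simpa using this

end FS
end

section
/- If a functional shift ℱ is sofic, then the generated shift X_ℱ is sofic. In particular, if ℱ has finite type then X_ℱ is sofic. -/
namespace FS

/-- A sofic shift: the set of label sequences of bi-infinite edge paths of a finite
labeled graph. -/
def IsSofic {A : Type} (X : Set (ℤ → A)) : Prop :=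
  ∃ (E : Type) (_ : Fintype E) (V : Type) (ini ter : E → V) (lab : E → A),
    X = {x | ∃ e : ℤ → E, ∀ k : ℤ, ter (e k) = ini (e (k + 1)) ∧ x k = lab (e k)}

/-- A shift of finite type: a shift space described by finitely many forbidden blocks. -/
def IsSFT {A : Type} (X : Set (ℤ → A)) : Prop :=
  ∃ Fb : Set (List A), Fb.Finite ∧ X = shiftOf Fb


lemma shiftOf_shift {B : Type} (Fb : Set (List B)) (x : ℤ → B) (k : ℤ)
    (hx : x ∈ shiftOf Fb) : (fun i => x (k + i)) ∈ shiftOf Fb := by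
  intro w hw hocc
  obtain ⟨m, hm⟩ := hocc
  refine hx w hw ⟨k + m, fun i => ?_⟩
  have := hm i
  simpa [add_assoc] using this

lemma sofic_of_isSofic_aux {A : Type} [Fintype A] (ℱ : Set (ℤ → (A → A)))
    (h : IsSofic ℱ) : IsSofic (generated ℱ) := by
  obtain ⟨E, hE, V, ini, ter, lab, hℱ⟩ := h
  refine ⟨E × A, inferInstance, V × A, (fun p => (ini p.1, p.2)),
    (fun p => (ter p.1, lab p.1 p.2)), (fun p => p.2), ?_⟩
  ext x
  constructor
  · rintro ⟨f, hf, hx⟩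
    rw [hℱ] at hf
    obtain ⟨e, he⟩ := hf
    refine ⟨fun k => (e k, x k), fun k => ?_⟩
    obtain ⟨h1, h2⟩ := he k
    refine ⟨?_, rfl⟩
    have : lab (e k) (x k) = x (k + 1) := by rw [hx k, h2]
    simp [h1, this]
  · rintro ⟨e, he⟩
    refine ⟨fun k => lab (e k).1, ?_, fun i => ?_⟩
    · rw [hℱ]
      exact ⟨fun k => (e k).1, fun k => ⟨congrArg Prod.fst (he k).1, rfl⟩⟩
    · have h1 := (he i).1
      have h2 := (he i).2
      have h3 := (he (i + 1)).2
      rw [h3, h2]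
      exact (congrArg Prod.snd h1).symm

lemma isSofic_of_isSFT {B : Type} [Finite B] {X : Set (ℤ → B)} (h : IsSFT X) :
    IsSofic X := by
  obtain ⟨Fb, hFb, rfl⟩ := h
  set N := hFb.toFinset.sup List.length with hN
  refine ⟨{u : Fin (N + 1) → B // ∃ x ∈ shiftOf Fb, ∀ i : Fin (N + 1), x (i : ℕ) = u i},
    Fintype.ofFinite _, Fin N → B,
    (fun u => fun i => u.1 i.castSucc), (fun u => fun i => u.1 i.succ),
    (fun u => u.1 0), ?_⟩
  ext x
  constructor
  · intro hx
    refine ⟨fun k => ⟨fun i => x (k + (i : ℕ)),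
      ⟨fun i => x (k + i), shiftOf_shift Fb x k hx, fun i => rfl⟩⟩, fun k => ?_⟩
    constructor
    · funext i
      show x (k + ((i.succ : Fin (N+1)) : ℕ)) = x ((k + 1) + ((i.castSucc : Fin (N+1)) : ℕ))
      congr 1
      push_cast [Fin.val_succ, Fin.coe_castSucc]
      ring
    · show x k = x (k + ((0 : Fin (N+1)) : ℕ))
      simp
  · rintro ⟨e, he⟩
    have key : ∀ (j : ℕ) (k : ℤ) (hj : j < N + 1), (e k).1 ⟨j, hj⟩ = x (k + j) := by
      intro j
      induction j with
      | zero =>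
        intro k hj
        have := (he k).2
        simpa using this.symm
      | succ j ih =>
        intro k hj
        have h1 := congrFun (he k).1 ⟨j, by omega⟩
        simp only [Fin.succ_mk, Fin.castSucc_mk] at h1
        rw [h1, ih (k + 1) (by omega)]
        congr 1
        push_cast
        ring
    intro w hw hocc
    obtain ⟨k, hk⟩ := hocc
    have hwN : w.length ≤ N := Finset.le_sup (hFb.mem_toFinset.mpr hw)
    obtain ⟨y, hy, hyu⟩ := (e k).2
    refine hy w hw ⟨0, fun i => ?_⟩
    have hi : (i : ℕ) < N + 1 := by omega
    have h1 := hyu ⟨i, hi⟩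
    have h2 := key i k hi
    have h3 := hk i
    simp only [Fin.val_mk] at h1 h2
    rw [← h3, ← h2, ← h1]
    norm_num

/-- if a functional shift is sofic then its generated shift is sofic;
in particular a functional shift of finite type generates a sofic shift. -/
theorem generated_sofic_of_sofic {A : Type} [Fintype A] :
    (∀ ℱ : Set (ℤ → (A → A)), IsSofic ℱ → IsSofic (generated ℱ)) ∧
    (∀ ℱ : Set (ℤ → (A → A)), IsSFT ℱ → IsSofic (generated ℱ)) := by
  refine ⟨fun ℱ h => sofic_of_isSofic_aux ℱ h, fun ℱ h => ?_⟩
  haveI : Finite (A → A) := inferInstance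
  exact sofic_of_isSofic_aux ℱ (isSofic_of_isSFT h)

end FS
end

section
/- If F is a set of bijections on A and ℱ is a functional shift over F whose language B(ℱ) is recursively enumerable, then the language B(X_ℱ) of the generated shift is recursively enumerable. -/
namespace FS

/-! ### Auxiliary computability material -/

/-- Check whether a single application is compatible. -/
noncomputable def app3 {A : Type} : (A → A) × A × A → Bool :=
  fun t => @decide (t.1 t.2.1 = t.2.2) (Classical.propDecidable _)

/-- Boolean compatibility check between a word `w` and a word of functions `u`. -/
noncomputable def chk {A : Type} (a0 : A) (w : List A) (u : List (A → A)) : Bool :=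
  decide (u.length = w.length - 1) &&
    ((List.range u.length).map fun i =>
      app3 (u.getD i id, w.getD i a0, w.getD (i + 1) a0)).foldr (fun a b => a && b) true

lemma foldr_all {β : Type} (f : β → Bool) :
    ∀ l : List β, ((l.map f).foldr (fun a b => a && b) true = true ↔ ∀ x ∈ l, f x = true)
  | [] => by simp
  | a :: l => by simp [foldr_all f l]

lemma chk_iff {A : Type} (a0 : A) (w : List A) (u : List (A → A)) :
    chk a0 w u = true ↔
      u.length = w.length - 1 ∧
        ∀ i < u.length, u.getD i id (w.getD i a0) = w.getD (i + 1) a0 := by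
  unfold chk app3
  rw [Bool.and_eq_true, decide_eq_true_eq, foldr_all]
  simp

lemma chk_primrec {A : Type} [Fintype A] [Primcodable A] [Primcodable (A → A)] (a0 : A) :
    Primrec₂ (chk a0) := by
  have hband : Primrec₂ (fun a b : Bool => a && b) :=
    Primrec.dom_finite (fun p : Bool × Bool => p.1 && p.2)
  have h1 : Primrec fun p : List A × List (A → A) => decide (p.2.length = p.1.length - 1) :=
    PrimrecPred.decide <| Primrec.eq.comp (Primrec.list_length.comp Primrec.snd)
      (Primrec.nat_sub.comp (Primrec.list_length.comp Primrec.fst) (Primrec.const 1))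
  have hg : Primrec₂ fun (p : List A × List (A → A)) (i : ℕ) =>
      app3 (p.2.getD i id, p.1.getD i a0, p.1.getD (i + 1) a0) :=
    (Primrec.dom_finite (@app3 A)).comp <|
      (((Primrec.list_getD id).comp (Primrec.snd.comp Primrec.fst) Primrec.snd).pair
        ((((Primrec.list_getD a0).comp (Primrec.fst.comp Primrec.fst) Primrec.snd)).pair
          ((Primrec.list_getD a0).comp (Primrec.fst.comp Primrec.fst)
            (Primrec.succ.comp Primrec.snd))))
  have h2 : Primrec fun p : List A × List (A → A) =>
      (List.range p.2.length).map fun i =>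
        app3 (p.2.getD i id, p.1.getD i a0, p.1.getD (i + 1) a0) :=
    Primrec.list_map (Primrec.list_range.comp (Primrec.list_length.comp Primrec.snd)) hg
  have h3 : Primrec fun p : List A × List (A → A) =>
      ((List.range p.2.length).map fun i =>
        app3 (p.2.getD i id, p.1.getD i a0, p.1.getD (i + 1) a0)).foldr
          (fun a b => a && b) true :=
    (Primrec.list_foldr h2 (Primrec.const true)
      ((Primrec.dom_finite (fun q : Bool × Bool => q.1 && q.2)).comp
        Primrec.snd).to₂).of_eq fun p => rfl
  exact (hband.comp h1 h3).of_eq fun p => rfl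

open Nat.Partrec (Code) in
open Nat.Partrec.Code in
/-- RE predicates are closed under existential quantification with a primrec side condition. -/
theorem re_exists {α β : Type} [Primcodable α] [Primcodable β] {q : β → Prop} (hq : REPred q)
    {c : α → β → Bool} (hc : Primrec₂ c) :
    REPred fun a => ∃ b, c a b = true ∧ q b := by
  obtain ⟨cd, hcd⟩ := Nat.Partrec.Code.exists_code.1 hq
  have key : ∀ b : β, q b ↔ ∃ k, (evaln k cd (Encodable.encode b)).isSome := by
    intro b
    have h1 : eval cd (Encodable.encode b)
        = (Part.assert (q b) fun _ => Part.some ()).map Encodable.encode := by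
      rw [hcd]; simp [Encodable.encodek]
    constructor
    · intro hb
      have hdom : (eval cd (Encodable.encode b)).Dom := by
        rw [h1]; exact ⟨hb, trivial⟩
      obtain ⟨x, hx⟩ := Part.dom_iff_mem.1 hdom
      obtain ⟨k, hk⟩ := evaln_complete.1 hx
      exact ⟨k, Option.isSome_iff_exists.2 ⟨x, hk⟩⟩
    · rintro ⟨k, hk⟩
      obtain ⟨x, hx⟩ := Option.isSome_iff_exists.1 hk
      have hdom : (eval cd (Encodable.encode b)).Dom :=
        Part.dom_iff_mem.2 ⟨x, evaln_complete.2 ⟨k, hx⟩⟩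
      rw [h1] at hdom
      exact hdom.1
  set D : α → ℕ → Bool := fun a m =>
    Option.casesOn (Encodable.decode (α := β) m.unpair.2) false
      (fun b => c a b && (evaln m.unpair.1 cd (Encodable.encode b)).isSome) with hDdef
  have hband : Primrec₂ (fun a b : Bool => a && b) :=
    Primrec.dom_finite (fun p : Bool × Bool => p.1 && p.2)
  have hisSome : Primrec (fun o : Option ℕ => o.isSome) :=
    (Primrec.option_casesOn Primrec.id (Primrec.const false)
      (Primrec.const true).to₂).of_eq fun o => by cases o <;> rfl
  have hD : Primrec₂ D := by
    apply Primrec.option_casesOn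
      (Primrec.decode.comp (Primrec.snd.comp (Primrec.unpair.comp Primrec.snd)))
      (Primrec.const false)
    exact hband.comp (hc.comp (Primrec.fst.comp Primrec.fst) Primrec.snd)
      (hisSome.comp (primrec_evaln.comp
        (((Primrec.fst.comp (Primrec.unpair.comp (Primrec.snd.comp Primrec.fst))).pair
          (Primrec.const cd)).pair (Primrec.encode.comp Primrec.snd))))
  have hpart : Partrec fun a => Nat.rfind fun m => Part.some (D a m) :=
    Partrec.rfind hD.to_comp.partrec₂
  refine hpart.dom_re.of_eq fun a => ?_
  refine (Nat.rfind_dom (p := fun m => Part.some (D a m))).trans ?_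
  constructor
  · rintro ⟨n, h1, -⟩
    have hDn : D a n = true := by simpa using h1
    rw [hDdef] at hDn
    simp only at hDn
    rcases he : Encodable.decode (α := β) n.unpair.2 with - | b
    · rw [he] at hDn; simp at hDn
    · rw [he] at hDn
      simp only [Bool.and_eq_true] at hDn
      exact ⟨b, hDn.1, (key b).2 ⟨n.unpair.1, hDn.2⟩⟩
  · rintro ⟨b, hcb, hqb⟩
    obtain ⟨k, hk⟩ := (key b).1 hqb
    refine ⟨Nat.pair k (Encodable.encode b), ?_, fun _ => trivial⟩
    have : D a (Nat.pair k (Encodable.encode b)) = true := by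
      rw [hDdef]
      simp [Nat.unpair_pair, Encodable.encodek, hcb, hk]
    simp [this]

/-- The key combinatorial characterization. -/
lemma key_iff {A : Type} (a0 : A) {F : Set (A → A)} (hbij : ∀ f ∈ F, Function.Bijective f)
    {ℱ : Set (ℤ → (A → A))} (hsub : ∀ g ∈ ℱ, ∀ i : ℤ, g i ∈ F) (w : List A) :
    w ∈ lang (generated ℱ) ↔ ∃ u, chk a0 w u = true ∧ u ∈ lang ℱ := by
  constructor
  · rintro ⟨x, ⟨g, hg, hgx⟩, k, hk⟩
    refine ⟨List.ofFn (fun j : Fin (w.length - 1) => g (k + j)), ?_, g, hg, k, ?_⟩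
    · rw [chk_iff]
      constructor
      · simp
      · intro i hi
        rw [List.length_ofFn] at hi
        have hi1 : i < w.length := by omega
        have hi2 : i + 1 < w.length := by omega
        have e1 : (List.ofFn fun j : Fin (w.length - 1) => g (k + j)).getD i id
            = g (k + i) := by
          rw [List.getD_eq_getElem _ _ (by simpa using hi), List.getElem_ofFn]
        have e2 : w.getD i a0 = x (k + i) := by
          have h := hk ⟨i, hi1⟩
          rw [List.getD_eq_getElem _ _ hi1]
          simpa using h.symm
        have e3 : w.getD (i + 1) a0 = x (k + i + 1) := by
          have h := hk ⟨i + 1, hi2⟩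
          rw [List.getD_eq_getElem _ _ hi2]
          have : (k + ((i : ℤ) + 1)) = k + i + 1 := by ring
          simp only [List.get_eq_getElem] at h
          push_cast at h
          rw [this] at h
          simpa using h.symm
        rw [e1, e2, e3, ← hgx (k + i)]
    · intro i
      simp only [List.get_ofFn]
      congr 1
  · rintro ⟨u, hchk, g, hg, k, hk⟩
    rw [chk_iff] at hchk
    obtain ⟨hlen, hcomp⟩ := hchk
    have hEb : ∀ i : ℤ, Function.Bijective (g i) := fun i => hbij _ (hsub g hg i)
    set E : ℤ → A ≃ A := fun i => Equiv.ofBijective _ (hEb i) with hE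
    have hEapp : ∀ i : ℤ, ∀ a : A, E i a = g i a := fun i a => rfl
    set a0' := w.getD 0 a0 with ha0'
    set Fw : ℕ → A := fun n => Nat.rec a0' (fun m a => E (k + m) a) n with hFdef
    set Bw : ℕ → A := fun n => Nat.rec a0' (fun m a => (E (k - m - 1)).symm a) n with hBdef
    have hFw : ∀ n : ℕ, Fw (n + 1) = E (k + n) (Fw n) := fun n => rfl
    have hBw : ∀ n : ℕ, Bw (n + 1) = (E (k - n - 1)).symm (Bw n) := fun n => rfl
    set x : ℤ → A := fun i => if k ≤ i then Fw (i - k).toNat else Bw (k - i).toNat with hxdef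
    have hxF : ∀ n : ℕ, x (k + n) = Fw n := by
      intro n
      simp only [hxdef]
      rw [if_pos (by omega), show (k + (n : ℤ) - k).toNat = n from by omega]
    have hgen : ∀ i : ℤ, x (i + 1) = g i (x i) := by
      intro i
      rw [← hEapp]
      by_cases hki : k ≤ i
      · have h1 : x i = Fw (i - k).toNat := by simp only [hxdef]; rw [if_pos hki]
        have h2 : x (i + 1) = Fw ((i - k).toNat + 1) := by
          simp only [hxdef]
          rw [if_pos (by omega), show (i + 1 - k).toNat = (i - k).toNat + 1 from by omega]
        rw [h1, h2, hFw, show (k + (((i - k).toNat : ℕ) : ℤ)) = i from by omega]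
      · push_neg at hki
        set m := (k - i - 1).toNat with hm
        have hmk : (k - i).toNat = m + 1 := by omega
        have h1 : x i = (E (k - m - 1)).symm (Bw m) := by
          simp only [hxdef]; rw [if_neg (by omega), hmk, hBw]
        have hkm : k - (m : ℤ) - 1 = i := by omega
        rw [hkm] at h1
        have h3 : x (i + 1) = Bw m := by
          by_cases hk1 : k ≤ i + 1
          · have hik : i + 1 = k := by omega
            have hm0 : m = 0 := by omega
            simp only [hxdef]; rw [if_pos (by omega), hik, hm0]
            rw [show (k - k).toNat = 0 from by omega]
            rfl
          · simp only [hxdef]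
            rw [if_neg hk1, show (k - (i + 1)).toNat = m from by omega]
        rw [h1, h3, Equiv.apply_symm_apply]
    have hocc : ∀ n : ℕ, n < w.length → Fw n = w.getD n a0 := by
      intro n
      induction n with
      | zero => intro _; rfl
      | succ n ih =>
        intro hn1
        have hnw : n < w.length := by omega
        have hnu : n < u.length := by omega
        have hgu : g (k + n) = u.getD n id := by
          have h := hk ⟨n, hnu⟩
          rw [List.getD_eq_getElem _ _ hnu]
          simpa using h
        rw [hFw, hEapp, hgu, ih hnw, hcomp n hnu]
    refine ⟨x, ⟨g, hg, hgen⟩, k, ?_⟩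
    intro i
    rw [hxF i, hocc i i.isLt, List.getD_eq_getElem _ _ i.isLt]
    simp

/-- if every map of `F` is a bijection and `B(ℱ)` is recursively
enumerable, then `B(X_ℱ)` is recursively enumerable. -/
theorem lang_generated_re {A : Type} [Fintype A] [Nonempty A]
    [Primcodable A] [Primcodable (A → A)]
    (F : Set (A → A)) (hF : F.Finite) (hbij : ∀ f ∈ F, Function.Bijective f)
    (ℱ : Set (ℤ → (A → A)))
    (hsub : ∀ g ∈ ℱ, ∀ i : ℤ, g i ∈ F) (hshift : IsShiftSpace ℱ)
    (hre : REPred (· ∈ lang ℱ)) :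
    REPred (· ∈ lang (generated ℱ)) := by
  have a0 : A := Classical.arbitrary A
  exact (re_exists hre (chk_primrec a0)).of_eq fun w =>
    (key_iff a0 hbij hsub w).symm

end FS
end

section
/- There exists a functional shift ℱ whose language B(ℱ) is recursively enumerable but whose generated shift X_ℱ has a language B(X_ℱ) that is not recursively enumerable. Concretely, over A = {0,1,δ} with F = {f,g,h} where f(0)=0, f(1)=δ, f(δ)=δ; g(0)=1, g(1)=1, g(δ)=δ; h(x)=δ for all x, one can choose r.e. ℱ so that for x of the form 0 1^n δ, x ∈ B(X_ℱ) iff the Turing machine with Gödel number n never halts on input x; hence membership in B(X_ℱ) is not semidecidable. -/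
namespace FS

/-! ### Auxiliary definitions -/

open Nat.Partrec (Code)
open Nat.Partrec.Code

abbrev M := Fin 3 → Fin 3

def fM : M := ![0,2,2]
def gM : M := ![1,1,2]
def hM : M := fun _ => 2

/-- machine `m-1` halts on input 0 within `t` steps -/
def haltB (m t : ℕ) : Bool := (evaln t (Denumerable.ofNat Code (m-1)) 0).isSome

def blk (t m : ℕ) (s : M) : List M := List.replicate t fM ++ List.replicate m gM ++ [s]

def Fb : Set (List M) :=
  {w | ∃ a ∈ w, ¬(a = fM ∨ a = gM ∨ a = hM)} ∪
  {w | ∃ t m s, 1 ≤ t ∧ 1 ≤ m ∧ haltB m t = true ∧ (s = fM ∨ s = hM) ∧ w = blk t m s}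

def FF : Set (ℤ → M) := shiftOf Fb

/-! ### Small facts -/

lemma blk_length (t m : ℕ) (s : M) : (blk t m s).length = t + m + 1 := by simp [blk]; ring

lemma blk_getD (t m : ℕ) (s : M) (i : ℕ) (h : i < t + m + 1) :
    (blk t m s).getD i hM = if i < t then fM else if i < t + m then gM else s := by
  unfold blk
  simp only [List.getD_eq_getElem?_getD]
  rcases lt_or_ge i t with h1 | h1
  · rw [List.getElem?_append_left (by simp; omega), List.getElem?_append_left (by simpa using h1)]
    simp [List.getElem?_replicate, h1, show i < t + m by omega]
  rcases lt_or_ge i (t+m) with h2 | h2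
  · rw [List.getElem?_append_left (by simp; omega), List.getElem?_append_right (by simp; omega)]
    simp [List.getElem?_replicate, show i - t < m by omega, h2, show ¬ i < t by omega]
  · rw [List.getElem?_append_right (by simp; omega)]
    simp [show i - (t+m) = 0 by omega, show ¬ i < t by omega, show ¬ i < t+m by omega]

lemma out0 : ∀ (F : M) (a : Fin 3), (F = fM ∨ F = gM ∨ F = hM) → F a = 0 → F = fM ∧ a = 0 := by
  decide

lemma out1 : ∀ (F : M) (a : Fin 3), (F = fM ∨ F = gM ∨ F = hM) → F a = 1 → F = gM := by decide

lemma out2of1 : ∀ (F : M), (F = fM ∨ F = gM ∨ F = hM) → F 1 = 2 → F = fM ∨ F = hM := by decide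

/-- `occursIn` via `getD`. -/
lemma occursIn_iff_getD {A : Type} (d : A) {b : List A} {x : ℤ → A} :
    occursIn b x ↔ ∃ k : ℤ, ∀ i : ℕ, i < b.length → x (k + i) = b.getD i d := by
  constructor
  · rintro ⟨k, hk⟩
    exact ⟨k, fun i hi => by
      have := hk ⟨i, hi⟩
      rw [List.getD_eq_getElem _ _ hi]
      simpa using this⟩
  · rintro ⟨k, hk⟩
    exact ⟨k, fun i => by
      have := hk i i.2
      rw [List.getD_eq_getElem _ _ i.2] at this
      simpa using this⟩

lemma FF_isS {q : ℤ → M} (hq : q ∈ FF) (i : ℤ) : q i = fM ∨ q i = gM ∨ q i = hM := by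
  by_contra h
  refine hq [q i] (Or.inl ⟨q i, by simp, h⟩) ?_
  refine (occursIn_iff_getD hM).2 ⟨i, fun j hj => ?_⟩
  have hj0 : j = 0 := by simp at hj; omega
  subst hj0
  simp

/-- membership in a sub-block position. -/
def matchAt (b w : List M) (k : ℕ) : Prop :=
  k + b.length ≤ w.length ∧ ∀ i < b.length, w.getD (k+i) hM = b.getD i hM

/-- Characterization of the language of `FF`. -/
lemma mem_lang_FF (w : List M) :
    w ∈ lang FF ↔ ((∀ a ∈ w, a = fM ∨ a = gM ∨ a = hM) ∧
      ∀ t m s k, 1 ≤ t → 1 ≤ m → haltB m t = true → (s = fM ∨ s = hM) →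
        ¬ matchAt (blk t m s) w k) := by
  constructor
  · rintro ⟨x, hx, hocc⟩
    obtain ⟨p, hp⟩ := (occursIn_iff_getD hM).1 hocc
    constructor
    · intro a ha
      obtain ⟨i, rfl⟩ := List.mem_iff_get.1 ha
      by_contra hnS
      refine hx [w.get i] (Or.inl ⟨w.get i, by simp, hnS⟩) ?_
      refine (occursIn_iff_getD hM).2 ⟨p + i, fun j hj => ?_⟩
      have hj0 : j = 0 := by simp at hj; omega
      subst hj0
      have := hp i i.2
      rw [List.getD_eq_getElem _ _ i.2] at this
      simpa using this
    · rintro t m s k ht hm hhalt hs ⟨hlen, hmatch⟩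
      refine hx (blk t m s) (Or.inr ⟨t, m, s, ht, hm, hhalt, hs, rfl⟩) ?_
      refine (occursIn_iff_getD hM).2 ⟨p + k, fun i hi => ?_⟩
      rw [blk_length] at hi hlen
      have h1 : k + i < w.length := by omega
      have := hp (k + i) h1
      rw [show (p + k) + (i:ℤ) = p + ((k + i : ℕ) : ℤ) by push_cast; ring, this,
        hmatch i (by rw [blk_length]; omega)]
  · rintro ⟨hS, hforb⟩
    set x : ℤ → M := fun j => if 0 ≤ j then w.getD j.toNat gM else gM with hxdef
    have hval : ∀ j : ℤ, x j = gM ∨ ∃ h : j.toNat < w.length, 0 ≤ j ∧ x j = w.getD j.toNat gM := by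
      intro j
      by_cases h0 : 0 ≤ j
      · by_cases h1 : j.toNat < w.length
        · exact Or.inr ⟨h1, h0, by simp [hxdef, h0]⟩
        · left; simp only [hxdef, if_pos h0]; exact List.getD_eq_default _ _ (by omega)
      · left; simp [hxdef, h0]
    have hrange : ∀ j : ℤ, x j ≠ gM → 0 ≤ j ∧ j.toNat < w.length ∧ x j = w.getD j.toNat gM := by
      intro j hj
      rcases hval j with h | ⟨h1, h2, h3⟩
      · exact absurd h hj
      · exact ⟨h2, h1, h3⟩
    have hSx : ∀ j : ℤ, x j = fM ∨ x j = gM ∨ x j = hM := by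
      intro j
      rcases hval j with h | ⟨h1, _, h3⟩
      · exact Or.inr (Or.inl h)
      · rw [h3, List.getD_eq_getElem _ _ h1]
        exact hS _ (List.getElem_mem h1)
    refine ⟨x, ?_, ?_⟩
    · rintro b (⟨a, hab, hnS⟩ | ⟨t, m, s, ht, hm, hhalt, hs, rfl⟩) hocc
      · obtain ⟨p, hp⟩ := (occursIn_iff_getD hM).1 hocc
        obtain ⟨i, rfl⟩ := List.mem_iff_get.1 hab
        have := hp i i.2
        rw [List.getD_eq_getElem _ _ i.2] at this
        simp only [List.get_eq_getElem] at hnS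
        rw [← this] at hnS
        exact hnS (hSx _)
      · obtain ⟨p, hp⟩ := (occursIn_iff_getD hM).1 hocc
        rw [blk_length] at hp
        have e0 : x (p + (0:ℕ)) = fM := by
          rw [hp 0 (by omega), blk_getD _ _ _ _ (by omega), if_pos (by omega)]
        have eLast : x (p + (t + m : ℕ)) = s := by
          rw [hp (t+m) (by omega), blk_getD _ _ _ _ (by omega), if_neg (by omega), if_neg (by omega)]
        have hfg : fM ≠ gM := by decide
        have hsg : s ≠ gM := by rcases hs with rfl | rfl <;> decide
        obtain ⟨hp0, hp0len, -⟩ := hrange p (by rw [show p + ((0:ℕ):ℤ) = p by simp] at e0; rw [e0]; exact hfg)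
        obtain ⟨hpl, hpllen, -⟩ := hrange (p + (t+m:ℕ)) (by rw [eLast]; exact hsg)
        set K := p.toNat with hK
        have hpK : p = (K : ℤ) := by omega
        have hKlen : (p + (t+m:ℕ)).toNat = K + t + m := by omega
        refine hforb t m s K ht hm hhalt hs ⟨?_, ?_⟩
        · rw [blk_length]; omega
        · intro i hi
          rw [blk_length] at hi
          have hKi : K + i < w.length := by omega
          have := hp i hi
          have hx1 : x (p + (i:ℕ)) = w.getD (K + i) gM := by
            have h0i : (0:ℤ) ≤ p + i := by omega
            have : (p + (i:ℕ)).toNat = K + i := by omega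
            simp only [hxdef, if_pos h0i, this]
          rw [hx1] at this
          have e2 : w.getD (K+i) hM = w.getD (K+i) gM := by
            rw [List.getD_eq_getElem _ _ hKi, List.getD_eq_getElem _ _ hKi]
          rw [e2]
          exact this
    · refine (occursIn_iff_getD hM).2 ⟨0, fun i hi => ?_⟩
      have h0 : (0:ℤ) ≤ (0:ℤ) + (i:ℕ) := by positivity
      have htn : ((0:ℤ) + (i:ℕ)).toNat = i := by omega
      simp only [hxdef, if_pos h0, htn]
      rw [List.getD_eq_getElem _ _ hi, List.getD_eq_getElem _ _ hi]

/-! ### The generated shift -/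

def wordOf (m : ℕ) : List (Fin 3) := 0 :: (List.replicate m 1 ++ [2])

lemma wordOf_length (m : ℕ) : (wordOf m).length = m + 2 := by simp [wordOf]

lemma wordOf_getD (m i : ℕ) (h : i < m + 2) :
    (wordOf m).getD i 0 = if i = 0 then 0 else if i ≤ m then 1 else 2 := by
  unfold wordOf
  rcases Nat.eq_zero_or_pos i with rfl | hi
  · simp
  obtain ⟨j, rfl⟩ := Nat.exists_eq_add_of_lt hi
  simp only [Nat.zero_add, List.getD_cons_succ]
  simp only [List.getD_eq_getElem?_getD]
  rcases lt_or_ge j m with h1 | h1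
  · rw [List.getElem?_append_left (by simpa using h1)]
    simp [List.getElem?_replicate, h1, show j+1 ≤ m by omega]
  · rw [List.getElem?_append_right (by simpa using h1)]
    have : j = m := by omega
    simp [this]

lemma word_mem_of_not_halt (m : ℕ) (hm : 1 ≤ m) (hH : ∀ t, ¬ haltB m t = true) :
    wordOf m ∈ lang (generated FF) := by
  set q : ℤ → M := fun j => if 0 ≤ j ∧ j < (m:ℤ) then gM else fM with hqdef
  set x : ℤ → Fin 3 := fun j => if j ≤ 0 then 0 else if j ≤ (m:ℤ) then 1 else 2 with hxdef
  have hqFF : q ∈ FF := by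
    rintro b (⟨a, hab, hnS⟩ | ⟨t, m', s, ht, hm', hhalt, hs, rfl⟩) hocc
    · obtain ⟨p, hp⟩ := (occursIn_iff_getD hM).1 hocc
      obtain ⟨i, rfl⟩ := List.mem_iff_get.1 hab
      have := hp i i.2
      rw [List.getD_eq_getElem _ _ i.2] at this
      simp only [List.get_eq_getElem] at hnS
      rw [← this] at hnS
      refine hnS ?_
      by_cases hc : 0 ≤ p + (i:ℕ) ∧ p + (i:ℕ) < (m:ℤ)
      · simp [hqdef, hc]
      · simp [hqdef, hc]
    · obtain ⟨p, hp⟩ := (occursIn_iff_getD hM).1 hocc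
      rw [blk_length] at hp
      have hqg : ∀ j : ℤ, q j = gM ↔ (0 ≤ j ∧ j < (m:ℤ)) := by
        intro j
        by_cases hc : 0 ≤ j ∧ j < (m:ℤ)
        · simp [hqdef, hc]
        · simp only [hqdef, if_neg hc]
          constructor
          · intro h; exact absurd h (by decide)
          · intro h; exact absurd h hc
      -- first g
      have hfirstg : q (p + (t:ℕ)) = gM := by
        rw [hp t (by omega), blk_getD _ _ _ _ (by omega), if_neg (by omega), if_pos (by omega)]
      rw [hqg] at hfirstg
      -- last f before the g-run
      have hlastf : q (p + (t-1:ℕ)) = fM := by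
        rw [hp (t-1) (by omega), blk_getD _ _ _ _ (by omega), if_pos (by omega)]
      have hlf : ¬ (0 ≤ p + ((t-1:ℕ):ℤ) ∧ p + ((t-1:ℕ):ℤ) < (m:ℤ)) := by
        intro hc
        have h2 := (hqg _).2 hc
        rw [hlastf] at h2
        exact absurd h2 (by decide)
      have hcast : p + ((t-1:ℕ):ℤ) = p + (t:ℕ) - 1 := by push_cast [ht]; ring
      have hpt0 : p + (t:ℕ) = 0 := by
        rw [hcast] at hlf
        omega
      -- last g
      have hlastg : q (p + (t + (m'-1) :ℕ)) = gM := by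
        rw [hp (t + (m'-1)) (by omega), blk_getD _ _ _ _ (by omega), if_neg (by omega),
          if_pos (by omega)]
      rw [hqg] at hlastg
      have hm'le : (m' : ℤ) - 1 < m := by
        have : (p + ((t + (m'-1):ℕ):ℤ)) < m := hlastg.2
        push_cast [hm'] at this ⊢
        omega
      -- the terminal symbol
      have hsq : q (p + (t + m' :ℕ)) = s := by
        rw [hp (t + m') (by omega), blk_getD _ _ _ _ (by omega), if_neg (by omega),
          if_neg (by omega)]
      have hsg : s ≠ gM := by rcases hs with rfl | rfl <;> decide
      have hge : ¬ (0 ≤ p + ((t + m':ℕ):ℤ) ∧ p + ((t + m':ℕ):ℤ) < (m:ℤ)) := by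
        intro hc
        rw [← hqg] at hc
        rw [hsq] at hc
        exact hsg hc
      have : (m':ℤ) ≥ m := by
        push_cast at hge hm'le ⊢
        omega
      have hmm : m' = m := by omega
      subst hmm
      exact hH t hhalt
  refine ⟨x, ⟨q, hqFF, ?_⟩, ?_⟩
  · intro i
    by_cases h1 : i < 0
    · have : ¬ (0 ≤ i ∧ i < (m:ℤ)) := by omega
      simp only [hqdef, hxdef, if_neg this, if_pos (by omega : i ≤ 0), if_pos (by omega : i+1 ≤ 0)]
      decide
    · by_cases h2 : i < (m:ℤ)
      · have hc : 0 ≤ i ∧ i < (m:ℤ) := by omega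
        simp only [hqdef, hxdef, if_pos hc]
        by_cases h3 : i ≤ 0
        · simp only [if_pos h3, if_neg (by omega : ¬ i + 1 ≤ 0), if_pos (by omega : i+1 ≤ (m:ℤ))]
          decide
        · simp only [if_neg h3, if_pos (by omega : i ≤ (m:ℤ)), if_neg (by omega : ¬ i + 1 ≤ 0),
            if_pos (by omega : i+1 ≤ (m:ℤ))]
          decide
      · have hc : ¬ (0 ≤ i ∧ i < (m:ℤ)) := by omega
        simp only [hqdef, hxdef, if_neg hc, if_neg (by omega : ¬ i ≤ 0),
          if_neg (by omega : ¬ i + 1 ≤ 0)]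
        by_cases h3 : i ≤ (m:ℤ)
        · simp only [if_pos h3, if_neg (by omega : ¬ i + 1 ≤ (m:ℤ))]
          decide
        · simp only [if_neg h3, if_neg (by omega : ¬ i + 1 ≤ (m:ℤ))]
          decide
  · refine (occursIn_iff_getD 0).2 ⟨0, fun i hi => ?_⟩
    rw [wordOf_length] at hi
    rw [wordOf_getD _ _ hi]
    rcases Nat.eq_zero_or_pos i with rfl | hipos
    · simp [hxdef]
    · by_cases h2 : i ≤ m
      · rw [if_neg (show ¬ i = 0 by omega), if_pos h2]
        simp only [hxdef]
        rw [if_neg (show ¬ (0:ℤ)+(i:ℕ) ≤ 0 by push_cast; omega),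
          if_pos (show (0:ℤ)+(i:ℕ) ≤ (m:ℤ) by push_cast; omega)]
      · rw [if_neg (show ¬ i = 0 by omega), if_neg h2]
        simp only [hxdef]
        rw [if_neg (show ¬ (0:ℤ)+(i:ℕ) ≤ 0 by push_cast; omega),
          if_neg (show ¬ (0:ℤ)+(i:ℕ) ≤ (m:ℤ) by push_cast; omega)]


lemma not_halt_of_word_mem (m : ℕ) (hm : 1 ≤ m) (hw : wordOf m ∈ lang (generated FF)) :
    ∀ t, ¬ haltB m t = true := by
  obtain ⟨x, ⟨q, hqFF, hrec⟩, hocc⟩ := hw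
  obtain ⟨p, hp⟩ := (occursIn_iff_getD 0).1 hocc
  rw [wordOf_length] at hp
  -- basic values of x on the window
  have hx0 : x p = 0 := by
    have := hp 0 (by omega)
    rw [wordOf_getD _ _ (by omega)] at this
    simpa using this
  have hx1 : ∀ i : ℕ, 1 ≤ i → i ≤ m → x (p + i) = 1 := by
    intro i h1 h2
    have := hp i (by omega)
    rwa [wordOf_getD _ _ (by omega), if_neg (by omega), if_pos h2] at this
  have hx2 : x (p + (m+1:ℕ)) = 2 := by
    have := hp (m+1) (by omega)
    rwa [wordOf_getD _ _ (by omega), if_neg (by omega), if_neg (by omega)] at this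
  have hS := fun j => FF_isS hqFF j
  -- the left tail of x is zero
  have hxz : ∀ j : ℕ, x (p - j) = 0 := by
    intro j
    induction j with
    | zero => simpa using hx0
    | succ n ih =>
      have hr := hrec (p - (n+1:ℕ))
      have he : p - ((n+1:ℕ):ℤ) + 1 = p - (n:ℕ) := by push_cast; ring
      rw [he, ih] at hr
      exact (out0 _ _ (hS _) hr.symm).2
  -- the left tail of q is fM
  have hqf : ∀ j : ℕ, q (p - (j+1:ℕ)) = fM := by
    intro j
    have hr := hrec (p - (j+1:ℕ))
    have he : p - ((j+1:ℕ):ℤ) + 1 = p - (j:ℕ) := by push_cast; ring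
    rw [he, hxz j] at hr
    exact (out0 _ _ (hS _) hr.symm).1
  -- q is gM on the run
  have hqg : ∀ i : ℕ, i < m → q (p + i) = gM := by
    intro i hi
    have hr := hrec (p + i)
    have he : p + (i:ℕ) + 1 = p + ((i+1:ℕ):ℤ) := by push_cast; ring
    rw [he, hx1 (i+1) (by omega) (by omega)] at hr
    exact out1 _ _ (hS _) hr.symm
  -- terminal symbol
  have hqs : q (p + (m:ℕ)) = fM ∨ q (p + (m:ℕ)) = hM := by
    have hr := hrec (p + m)
    have he : p + (m:ℕ) + 1 = p + ((m+1:ℕ):ℤ) := by push_cast; ring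
    rw [he, hx2] at hr
    rw [hx1 m hm le_rfl] at hr
    exact out2of1 _ (hS _) hr.symm
  -- now suppose halting
  intro t ht
  -- bump to a positive time
  have ht1 : haltB m (t+1) = true := by
    unfold haltB at ht ⊢
    rw [Option.isSome_iff_exists] at ht ⊢
    obtain ⟨a, ha⟩ := ht
    exact ⟨a, evaln_mono (Nat.le_succ t) ha⟩
  set T := t + 1 with hT
  refine hqFF (blk T m (q (p + (m:ℕ))))
    (Or.inr ⟨T, m, _, by omega, hm, ht1, hqs, rfl⟩) ?_
  refine (occursIn_iff_getD hM).2 ⟨p - T, fun i hi => ?_⟩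
  rw [blk_length] at hi
  rw [blk_getD _ _ _ _ hi]
  rcases lt_or_ge i T with h1 | h1
  · rw [if_pos h1]
    have he : p - (T:ℕ) + (i:ℕ) = p - ((T - 1 - i + 1 : ℕ):ℤ) := by push_cast; omega
    rw [he]
    exact hqf _
  rcases lt_or_ge i (T + m) with h2 | h2
  · rw [if_neg (by omega), if_pos h2]
    have he : p - (T:ℕ) + (i:ℕ) = p + ((i - T : ℕ):ℤ) := by push_cast; omega
    rw [he]
    exact hqg _ (by omega)
  · rw [if_neg (by omega), if_neg (by omega)]
    have hieq : i = T + m := by omega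
    have he : p - (T:ℕ) + (i:ℕ) = p + ((m:ℕ):ℤ) := by rw [hieq]; push_cast; ring
    rw [he]


lemma not_halt_iff (n : ℕ) :
    (∀ t, ¬ haltB (n+1) t = true) ↔ ¬ (eval (Denumerable.ofNat Code n) 0).Dom := by
  unfold haltB
  simp only [Nat.add_sub_cancel]
  rw [not_iff_not.2 Part.dom_iff_mem]
  constructor
  · rintro h ⟨a, ha⟩
    obtain ⟨k, hk⟩ := evaln_complete.1 ha
    exact h k (Option.isSome_iff_exists.2 ⟨a, hk⟩)
  · intro h t hsome
    obtain ⟨a, ha⟩ := Option.isSome_iff_exists.1 hsome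
    exact h ⟨a, evaln_complete.2 ⟨t, ha⟩⟩

lemma mem_iff_not_dom (n : ℕ) :
    (wordOf (n+1) ∈ lang (generated FF)) ↔ ¬ (eval (Denumerable.ofNat Code n) 0).Dom := by
  constructor
  · intro h
    exact (not_halt_iff n).1 (not_halt_of_word_mem (n+1) (by omega) h)
  · intro h
    exact word_mem_of_not_halt (n+1) (by omega) ((not_halt_iff n).2 h)

lemma range_map_const {α : Type*} (a : α) (n : ℕ) :
    (List.range n).map (fun _ => a) = List.replicate n a := by
  induction n with
  | zero => simp
  | succ k ih => rw [List.range_succ, List.map_append, ih, List.replicate_succ']; simp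

lemma primrec_wordOfSucc : Primrec (fun n => wordOf (n+1)) := by
  have hrep : Primrec (fun n => List.replicate n (1 : Fin 3)) := by
    have := Primrec.list_map Primrec.list_range
      ((Primrec.const (1 : Fin 3)).comp .snd).to₂
    exact this.of_eq fun n => range_map_const _ _
  have : Primrec (fun n : ℕ => (0 : Fin 3) :: (List.replicate (n+1) (1:Fin 3) ++ [(2:Fin 3)])) :=
    Primrec.list_cons.comp (Primrec.const 0)
      (Primrec.list_append.comp (hrep.comp Primrec.succ) (Primrec.const [2]))
  exact this.of_eq fun n => by simp [wordOf]

lemma not_re_generated : ¬ REPred (· ∈ lang (generated FF)) := by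
  intro hre
  have h1 : REPred fun n : ℕ => wordOf (n+1) ∈ lang (generated FF) :=
    Partrec.comp hre primrec_wordOfSucc.to_comp
  have h3 : REPred fun c : Code => wordOf (Encodable.encode c + 1) ∈ lang (generated FF) :=
    Partrec.comp h1 Computable.encode
  have heq : (fun c : Code => wordOf (Encodable.encode c + 1) ∈ lang (generated FF))
      = fun c : Code => ¬ (eval c 0).Dom := by
    funext c
    apply propext
    rw [mem_iff_not_dom, Denumerable.ofNat_encode]
  rw [heq] at h3
  exact ComputablePred.halting_problem_not_re 0 h3


/-! ### The language of `FF` is decidable, hence r.e. -/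

def checkW (w : List M) : Bool :=
  ((List.range w.length).all fun i =>
      (decide (w.getD i hM = fM) || decide (w.getD i hM = gM) || decide (w.getD i hM = hM))) &&
  !((List.range (w.length+1)).any fun k =>
    (List.range (w.length+1)).any fun t =>
      (List.range (w.length+1)).any fun m =>
        (decide (1 ≤ t) && decide (1 ≤ m) && haltB m t && decide (k+t+m+1 ≤ w.length) &&
         ((List.range t).all fun i => decide (w.getD (k+i) hM = fM)) &&
         ((List.range m).all fun i => decide (w.getD (k+t+i) hM = gM)) &&
         (decide (w.getD (k+t+m) hM = fM) || decide (w.getD (k+t+m) hM = hM))))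

lemma foldr_eq_all {β : Type*} (l : List β) (q : β → Bool) :
    l.foldr (fun b s => q b && s) true = l.all q := by
  induction l with
  | nil => rfl
  | cons a l ih => simp [ih]

lemma foldr_eq_any {β : Type*} (l : List β) (q : β → Bool) :
    l.foldr (fun b s => q b || s) false = l.any q := by
  induction l with
  | nil => rfl
  | cons a l ih => simp [ih]

lemma primrec_rangeAll {α : Type*} [Primcodable α] {f : α → ℕ} {p : α → ℕ → Bool}
    (hf : Primrec f) (hp : Primrec₂ p) :
    Primrec fun a => (List.range (f a)).all (p a) := by
  have h := Primrec.list_foldr (Primrec.list_range.comp hf) (Primrec.const true)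
    (((Primrec.dom_bool₂ (· && ·)).comp (hp.comp Primrec.fst (Primrec.fst.comp Primrec.snd))
      (Primrec.snd.comp Primrec.snd)).to₂)
  exact h.of_eq fun a => foldr_eq_all (List.range (f a)) (p a)

lemma primrec_rangeAny {α : Type*} [Primcodable α] {f : α → ℕ} {p : α → ℕ → Bool}
    (hf : Primrec f) (hp : Primrec₂ p) :
    Primrec fun a => (List.range (f a)).any (p a) := by
  have h := Primrec.list_foldr (Primrec.list_range.comp hf) (Primrec.const false)
    (((Primrec.dom_bool₂ (· || ·)).comp (hp.comp Primrec.fst (Primrec.fst.comp Primrec.snd))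
      (Primrec.snd.comp Primrec.snd)).to₂)
  exact h.of_eq fun a => foldr_eq_any (List.range (f a)) (p a)

lemma primrec_checkW : Primrec checkW := by
  have band : Primrec₂ (· && ·) := Primrec.dom_bool₂ _
  have bor : Primrec₂ (· || ·) := Primrec.dom_bool₂ _
  -- letters check
  have hletters : Primrec fun w : List M => (List.range w.length).all fun i =>
      (decide (w.getD i hM = fM) || decide (w.getD i hM = gM) || decide (w.getD i hM = hM)) := by
    apply primrec_rangeAll Primrec.list_length
    have hg : Primrec fun x : List M × ℕ => x.1.getD x.2 hM :=
      Primrec₂.comp (f := fun (l : List M) (n : ℕ) => l.getD n hM)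
        (Primrec.list_getD hM) Primrec.fst Primrec.snd
    exact (Primrec₂.comp bor (Primrec₂.comp bor
        (Primrec.eq.comp hg (Primrec.const fM)).decide (Primrec.eq.comp hg (Primrec.const gM)).decide)
      (Primrec.eq.comp hg (Primrec.const hM)).decide).to₂
  -- inner check
  have hinner : Primrec fun x : ((List M × ℕ) × ℕ) × ℕ =>
      (decide (1 ≤ x.1.2) && decide (1 ≤ x.2) && haltB x.2 x.1.2 &&
        decide (x.1.1.2 + x.1.2 + x.2 + 1 ≤ x.1.1.1.length) &&
        ((List.range x.1.2).all fun i => decide (x.1.1.1.getD (x.1.1.2 + i) hM = fM)) &&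
        ((List.range x.2).all fun i => decide (x.1.1.1.getD (x.1.1.2 + x.1.2 + i) hM = gM)) &&
        (decide (x.1.1.1.getD (x.1.1.2 + x.1.2 + x.2) hM = fM) ||
         decide (x.1.1.1.getD (x.1.1.2 + x.1.2 + x.2) hM = hM))) := by
    set X := ((List M × ℕ) × ℕ) × ℕ
    have pw : Primrec fun x : X => x.1.1.1 := Primrec.fst.comp (Primrec.fst.comp Primrec.fst)
    have pk : Primrec fun x : X => x.1.1.2 := Primrec.snd.comp (Primrec.fst.comp Primrec.fst)
    have pt : Primrec fun x : X => x.1.2 := Primrec.snd.comp Primrec.fst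
    have pm : Primrec fun x : X => x.2 := Primrec.snd
    have h1 : Primrec fun x : X => decide (1 ≤ x.1.2) :=
      (Primrec.nat_le.comp (Primrec.const 1) pt).decide
    have h2 : Primrec fun x : X => decide (1 ≤ x.2) :=
      (Primrec.nat_le.comp (Primrec.const 1) pm).decide
    have hhalt : Primrec fun x : X => haltB x.2 x.1.2 := by
      have := Nat.Partrec.Code.primrec_evaln.comp
        ((pt.pair ((Primrec.ofNat Code).comp (Primrec.pred.comp pm))).pair (Primrec.const 0))
      exact Primrec.option_isSome.comp this
    have hkt : Primrec fun x : X => x.1.1.2 + x.1.2 := Primrec₂.comp Primrec.nat_add pk pt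
    have hktm : Primrec fun x : X => x.1.1.2 + x.1.2 + x.2 := Primrec₂.comp Primrec.nat_add hkt pm
    have hlen : Primrec fun x : X => decide (x.1.1.2 + x.1.2 + x.2 + 1 ≤ x.1.1.1.length) :=
      (Primrec.nat_le.comp (Primrec.succ.comp hktm) (Primrec.list_length.comp pw)).decide
    have hfs : Primrec fun x : X =>
        (List.range x.1.2).all fun i => decide (x.1.1.1.getD (x.1.1.2 + i) hM = fM) := by
      apply primrec_rangeAll pt
      have hidx : Primrec fun y : X × ℕ => y.1.1.1.2 + y.2 :=
        Primrec₂.comp Primrec.nat_add (pk.comp Primrec.fst) Primrec.snd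
      have hg : Primrec fun y : X × ℕ => y.1.1.1.1.getD (y.1.1.1.2 + y.2) hM :=
        Primrec₂.comp (f := fun (l : List M) (n : ℕ) => l.getD n hM)
          (Primrec.list_getD hM) (pw.comp Primrec.fst) hidx
      exact (Primrec.eq.comp hg (Primrec.const fM)).decide.to₂
    have hgs : Primrec fun x : X =>
        (List.range x.2).all fun i => decide (x.1.1.1.getD (x.1.1.2 + x.1.2 + i) hM = gM) := by
      apply primrec_rangeAll pm
      have hidx : Primrec fun y : X × ℕ => y.1.1.1.2 + y.1.1.2 + y.2 :=
        Primrec₂.comp Primrec.nat_add (hkt.comp Primrec.fst) Primrec.snd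
      have hg : Primrec fun y : X × ℕ => y.1.1.1.1.getD (y.1.1.1.2 + y.1.1.2 + y.2) hM :=
        Primrec₂.comp (f := fun (l : List M) (n : ℕ) => l.getD n hM)
          (Primrec.list_getD hM) (pw.comp Primrec.fst) hidx
      exact (Primrec.eq.comp hg (Primrec.const gM)).decide.to₂
    have hlast : Primrec fun x : X =>
        (decide (x.1.1.1.getD (x.1.1.2 + x.1.2 + x.2) hM = fM) ||
         decide (x.1.1.1.getD (x.1.1.2 + x.1.2 + x.2) hM = hM)) := by
      have hg : Primrec fun x : X => x.1.1.1.getD (x.1.1.2 + x.1.2 + x.2) hM :=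
        Primrec₂.comp (f := fun (l : List M) (n : ℕ) => l.getD n hM)
          (Primrec.list_getD hM) pw hktm
      exact Primrec₂.comp bor (Primrec.eq.comp hg (Primrec.const fM)).decide
        (Primrec.eq.comp hg (Primrec.const hM)).decide
    exact Primrec₂.comp band (Primrec₂.comp band (Primrec₂.comp band (Primrec₂.comp band
      (Primrec₂.comp band (Primrec₂.comp band h1 h2) hhalt) hlen) hfs) hgs) hlast
  -- the nested anys
  have hlev3 : Primrec fun y : (List M × ℕ) × ℕ => (List.range (y.1.1.length + 1)).any fun m =>
      (decide (1 ≤ y.2) && decide (1 ≤ m) && haltB m y.2 &&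
        decide (y.1.2 + y.2 + m + 1 ≤ y.1.1.length) &&
        ((List.range y.2).all fun i => decide (y.1.1.getD (y.1.2 + i) hM = fM)) &&
        ((List.range m).all fun i => decide (y.1.1.getD (y.1.2 + y.2 + i) hM = gM)) &&
        (decide (y.1.1.getD (y.1.2 + y.2 + m) hM = fM) ||
         decide (y.1.1.getD (y.1.2 + y.2 + m) hM = hM))) := by
    apply primrec_rangeAny
      (Primrec.succ.comp (Primrec.list_length.comp (Primrec.fst.comp Primrec.fst)))
    exact hinner.to₂
  have hlev2 : Primrec fun z : List M × ℕ => (List.range (z.1.length + 1)).any fun t =>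
      (List.range (z.1.length + 1)).any fun m =>
      (decide (1 ≤ t) && decide (1 ≤ m) && haltB m t &&
        decide (z.2 + t + m + 1 ≤ z.1.length) &&
        ((List.range t).all fun i => decide (z.1.getD (z.2 + i) hM = fM)) &&
        ((List.range m).all fun i => decide (z.1.getD (z.2 + t + i) hM = gM)) &&
        (decide (z.1.getD (z.2 + t + m) hM = fM) ||
         decide (z.1.getD (z.2 + t + m) hM = hM))) := by
    apply primrec_rangeAny (Primrec.succ.comp (Primrec.list_length.comp Primrec.fst))
    exact hlev3.to₂
  have hlev1 : Primrec fun w : List M => (List.range (w.length + 1)).any fun k =>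
      (List.range (w.length + 1)).any fun t =>
      (List.range (w.length + 1)).any fun m =>
      (decide (1 ≤ t) && decide (1 ≤ m) && haltB m t &&
        decide (k + t + m + 1 ≤ w.length) &&
        ((List.range t).all fun i => decide (w.getD (k + i) hM = fM)) &&
        ((List.range m).all fun i => decide (w.getD (k + t + i) hM = gM)) &&
        (decide (w.getD (k + t + m) hM = fM) ||
         decide (w.getD (k + t + m) hM = hM))) := by
    apply primrec_rangeAny (Primrec.succ.comp Primrec.list_length)
    exact hlev2.to₂
  exact Primrec₂.comp band hletters (Primrec.not.comp hlev1)


lemma checkW_iff (w : List M) :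
    checkW w = true ↔ ((∀ a ∈ w, a = fM ∨ a = gM ∨ a = hM) ∧
      ∀ t m s k, 1 ≤ t → 1 ≤ m → haltB m t = true → (s = fM ∨ s = hM) →
        ¬ matchAt (blk t m s) w k) := by
  unfold checkW
  rw [Bool.and_eq_true, Bool.not_eq_true']
  constructor
  · rintro ⟨hL, hB⟩
    constructor
    · intro a ha
      obtain ⟨i, hi, rfl⟩ := List.mem_iff_getElem.1 ha
      have := List.all_eq_true.1 hL i (List.mem_range.2 hi)
      rw [← List.getD_eq_getElem w hM hi]
      simp only [Bool.or_eq_true, decide_eq_true_eq] at this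
      tauto
    · rintro t m s k ht hm hhalt hs ⟨hlen, hmatch⟩
      rw [blk_length] at hlen hmatch
      have hBtrue : ((List.range (w.length+1)).any fun k =>
          (List.range (w.length+1)).any fun t =>
          (List.range (w.length+1)).any fun m =>
            (decide (1 ≤ t) && decide (1 ≤ m) && haltB m t && decide (k+t+m+1 ≤ w.length) &&
             ((List.range t).all fun i => decide (w.getD (k+i) hM = fM)) &&
             ((List.range m).all fun i => decide (w.getD (k+t+i) hM = gM)) &&
             (decide (w.getD (k+t+m) hM = fM) || decide (w.getD (k+t+m) hM = hM)))) = true := by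
        rw [List.any_eq_true]
        refine ⟨k, List.mem_range.2 (by omega), ?_⟩
        rw [List.any_eq_true]
        refine ⟨t, List.mem_range.2 (by omega), ?_⟩
        rw [List.any_eq_true]
        refine ⟨m, List.mem_range.2 (by omega), ?_⟩
        simp only [Bool.and_eq_true, Bool.or_eq_true, decide_eq_true_eq, List.all_eq_true,
          List.mem_range]
        refine ⟨⟨⟨⟨⟨⟨ht, hm⟩, hhalt⟩, by omega⟩, ?_⟩, ?_⟩, ?_⟩
        · intro i hi
          have := hmatch i (by omega)
          rwa [blk_getD _ _ _ _ (by omega), if_pos hi] at this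
        · intro i hi
          have := hmatch (t+i) (by omega)
          rwa [blk_getD _ _ _ _ (by omega), if_neg (by omega), if_pos (by omega),
            show k + (t+i) = k + t + i by omega] at this
        · have := hmatch (t+m) (by omega)
          rw [blk_getD _ _ _ _ (by omega), if_neg (by omega), if_neg (by omega),
            show k + (t+m) = k + t + m by omega] at this
          rw [this]
          exact hs
      rw [hB] at hBtrue
      cases hBtrue
  · rintro ⟨hS, hforb⟩
    constructor
    · rw [List.all_eq_true]
      intro i hi
      rw [List.mem_range] at hi
      have := hS (w.getD i hM) (by rw [List.getD_eq_getElem _ _ hi]; exact List.getElem_mem hi)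
      simp only [Bool.or_eq_true, decide_eq_true_eq]
      tauto
    · rw [Bool.eq_false_iff]
      intro hB
      rw [List.any_eq_true] at hB
      obtain ⟨k, -, hB⟩ := hB
      rw [List.any_eq_true] at hB
      obtain ⟨t, -, hB⟩ := hB
      rw [List.any_eq_true] at hB
      obtain ⟨m, -, hB⟩ := hB
      simp only [Bool.and_eq_true, Bool.or_eq_true, decide_eq_true_eq, List.all_eq_true,
        List.mem_range] at hB
      obtain ⟨⟨⟨⟨⟨⟨ht, hm⟩, hhalt⟩, hlen⟩, hfs⟩, hgs⟩, hlast⟩ := hB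
      refine hforb t m (w.getD (k+t+m) hM) k ht hm hhalt hlast ⟨?_, ?_⟩
      · rw [blk_length]; omega
      · intro i hi
        rw [blk_length] at hi
        rw [blk_getD _ _ _ _ hi]
        rcases lt_or_ge i t with h1 | h1
        · rw [if_pos h1]; exact hfs i h1
        rcases lt_or_ge i (t+m) with h2 | h2
        · rw [if_neg (by omega), if_pos h2, show k + i = k + t + (i - t) by omega]
          exact hgs (i-t) (by omega)
        · rw [if_neg (by omega), if_neg (by omega), show k + i = k + t + m by omega]

lemma computable_lang_FF : ComputablePred (· ∈ lang FF) :=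
  ComputablePred.computable_iff.2 ⟨checkW, primrec_checkW.to_comp,
    funext fun w => propext ((mem_lang_FF w).trans (checkW_iff w).symm)⟩

/-- there is a functional shift `ℱ` (over the alphabet `{0, 1, δ} = Fin 3`
with maps `f = ![0,δ,δ]`, `g = ![1,1,δ]`, `h = const δ`, where `δ = 2`) whose language is
recursively enumerable while the language of its generated shift is not recursively
enumerable. -/
theorem exists_functionalShift_re_generated_not_re :
    ∃ ℱ : Set (ℤ → (Fin 3 → Fin 3)),
      IsShiftSpace ℱ ∧
      (∀ q ∈ ℱ, ∀ i : ℤ,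
        q i ∈ ({![0, 2, 2], ![1, 1, 2], fun _ => 2} : Set (Fin 3 → Fin 3))) ∧
      REPred (· ∈ lang ℱ) ∧
      ¬ REPred (· ∈ lang (generated ℱ)) := by
  refine ⟨FF, ⟨Fb, rfl⟩, ?_, computable_lang_FF.to_re, not_re_generated⟩
  intro q hq i
  rcases FF_isS hq i with h | h | h
  · exact Or.inl h
  · exact Or.inr (Or.inl h)
  · exact Or.inr (Or.inr h)

end FS
end
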